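/- arXiv:2302.07202 — 4 statements merged into one kernel-verified Lean document; each statement's English description precedes it below -/
import Mathlib

section
/- Let A be an m×n real matrix with linearly independent columns and S an s×m matrix with linearly independent rows, s ≥ n. Let A = Q_A R_A and SA = QR be economized QR factorizations. Then the condition number of A R⁻¹ equals the condition number of S Q_A, i.e., κ₂(A R⁻¹) = κ₂(S Q_A). -/
open Matrix BigOperators

/-- Spectral (operator 2-) norm of a real matrix. -/
noncomputable def spec {m n : ℕ} (A : Matrix (Fin m) (Fin n) ℝ) : ℝ :=
  ‖(LinearMap.toContinuousLinearMap
      (Matrix.toEuclideanLin A : EuclideanSpace ℝ (Fin n) →ₗ[ℝ] EuclideanSpace ℝ (Fin m)))‖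

/-- Smallest singular value: infimum of ‖Ax‖ over unit vectors x. -/
noncomputable def smin {m n : ℕ} (A : Matrix (Fin m) (Fin n) ℝ) : ℝ :=
  ⨅ x : {x : EuclideanSpace ℝ (Fin n) // ‖x‖ = 1},
    ‖(Matrix.toEuclideanLin A : EuclideanSpace ℝ (Fin n) →ₗ[ℝ] EuclideanSpace ℝ (Fin m)) x.1‖

/-- 2-norm condition number σ_max/σ_min. -/
noncomputable def cond2 {m n : ℕ} (A : Matrix (Fin m) (Fin n) ℝ) : ℝ := spec A / smin A

/-- Frobenius norm. -/
noncomputable def frob {m n : ℕ} (A : Matrix (Fin m) (Fin n) ℝ) : ℝ :=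
  Real.sqrt (∑ i, ∑ j, (A i j) ^ 2)

/-- Euclidean norm of a vector. -/
noncomputable def vnorm {k : ℕ} (v : Fin k → ℝ) : ℝ := Real.sqrt (∑ i, (v i) ^ 2)

/-- Moore–Penrose pseudoinverse of a full-column-rank matrix. -/
noncomputable def pinv {m n : ℕ} (A : Matrix (Fin m) (Fin n) ℝ) : Matrix (Fin n) (Fin m) ℝ :=
  (Aᵀ * A)⁻¹ * Aᵀ

/-- A has full column rank: its columns are linearly independent. -/
def fullColRank {m n : ℕ} (A : Matrix (Fin m) (Fin n) ℝ) : Prop :=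
  LinearIndependent ℝ (fun j : Fin n => Aᵀ j)

/-- Q has orthonormal columns. -/
def orthonormalCols {m n : ℕ} (Q : Matrix (Fin m) (Fin n) ℝ) : Prop := Qᵀ * Q = 1

/-- Upper triangular square matrix. -/
def upperTri {n : ℕ} (R : Matrix (Fin n) (Fin n) ℝ) : Prop := R.BlockTriangular id

open scoped InnerProductSpace

noncomputable def eL {m n : ℕ} (A : Matrix (Fin m) (Fin n) ℝ) :
    EuclideanSpace ℝ (Fin n) →L[ℝ] EuclideanSpace ℝ (Fin m) :=
  LinearMap.toContinuousLinearMap (Matrix.toEuclideanLin A)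

lemma eL_mul {m n p : ℕ} (A : Matrix (Fin m) (Fin n) ℝ) (B : Matrix (Fin n) (Fin p) ℝ)
    (x : EuclideanSpace ℝ (Fin p)) : eL (A * B) x = eL A (eL B x) := by
  simp [eL, Matrix.toEuclideanLin_apply, Matrix.mulVec_mulVec]

lemma eL_one {n : ℕ} (x : EuclideanSpace ℝ (Fin n)) : eL (1 : Matrix (Fin n) (Fin n) ℝ) x = x := by
  simp [eL, Matrix.toEuclideanLin_apply]

lemma eL_norm_orth {m n : ℕ} {Q : Matrix (Fin m) (Fin n) ℝ} (hQ : Qᵀ * Q = 1)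
    (x : EuclideanSpace ℝ (Fin n)) : ‖eL Q x‖ = ‖x‖ := by
  have hdot : ∀ v : Fin n → ℝ, (Q *ᵥ v) ⬝ᵥ (Q *ᵥ v) = v ⬝ᵥ v := by
    intro v
    rw [Matrix.dotProduct_mulVec, ← Matrix.mulVec_transpose, Matrix.mulVec_mulVec, hQ,
      Matrix.one_mulVec]
  have hinner : ⟪eL Q x, eL Q x⟫_ℝ = ⟪x, x⟫_ℝ := by
    simp only [PiLp.inner_apply, RCLike.inner_apply, starRingEnd_apply, star_trivial]
    exact hdot _
  have h1 := real_inner_self_eq_norm_sq (eL Q x)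
  have h2 := real_inner_self_eq_norm_sq x
  nlinarith [norm_nonneg (eL Q x), norm_nonneg x]

lemma opNorm_congr {E F G : Type*} [NormedAddCommGroup E] [NormedAddCommGroup F]
    [NormedAddCommGroup G] [NormedSpace ℝ E] [NormedSpace ℝ F] [NormedSpace ℝ G]
    (f : E →L[ℝ] F) (g : E →L[ℝ] G) (h : ∀ x, ‖f x‖ = ‖g x‖) : ‖f‖ = ‖g‖ := by
  refine le_antisymm (f.opNorm_le_bound (norm_nonneg g) fun x => ?_)
    (g.opNorm_le_bound (norm_nonneg f) fun x => ?_)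
  · rw [h]; exact g.le_opNorm x
  · rw [← h]; exact f.le_opNorm x

lemma spec_eL {m n : ℕ} (A : Matrix (Fin m) (Fin n) ℝ) : spec A = ‖eL A‖ := rfl

lemma smin_eL {m n : ℕ} (A : Matrix (Fin m) (Fin n) ℝ) :
    smin A = ⨅ x : {x : EuclideanSpace ℝ (Fin n) // ‖x‖ = 1}, ‖eL A x.1‖ := rfl

lemma spec_orth_mul {s m n : ℕ} {Q : Matrix (Fin s) (Fin m) ℝ} (hQ : Qᵀ * Q = 1)
    (M : Matrix (Fin m) (Fin n) ℝ) : spec (Q * M) = spec M := by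
  rw [spec_eL, spec_eL]
  exact opNorm_congr _ _ fun x => by rw [eL_mul, eL_norm_orth hQ]

lemma smin_orth_mul {s m n : ℕ} {Q : Matrix (Fin s) (Fin m) ℝ} (hQ : Qᵀ * Q = 1)
    (M : Matrix (Fin m) (Fin n) ℝ) : smin (Q * M) = smin M := by
  rw [smin_eL, smin_eL]
  exact iInf_congr fun x => by rw [eL_mul, eL_norm_orth hQ]

lemma cond2_orth_mul {s m n : ℕ} {Q : Matrix (Fin s) (Fin m) ℝ} (hQ : Qᵀ * Q = 1)
    (M : Matrix (Fin m) (Fin n) ℝ) : cond2 (Q * M) = cond2 M := by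
  rw [cond2, cond2, spec_orth_mul hQ, smin_orth_mul hQ]

set_option maxHeartbeats 1000000 in
lemma spec_inv {n : ℕ} (T : Matrix (Fin n) (Fin n) ℝ) (hT : IsUnit T) :
    spec T⁻¹ = (smin T)⁻¹ := by
  rcases Nat.eq_zero_or_pos n with hn | hn
  · subst hn
    have h1 : spec T⁻¹ = 0 := by
      rw [spec_eL]
      have he : eL T⁻¹ = 0 := by
        ext x i; exact absurd i.2 (by omega)
      rw [he, norm_zero]
    have h2 : smin T = 0 := by
      rw [smin_eL]
      haveI : IsEmpty {x : EuclideanSpace ℝ (Fin 0) // ‖x‖ = 1} := by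
        constructor
        rintro ⟨x, hx⟩
        have hx0 : x = 0 := Subsingleton.elim x 0
        rw [hx0, norm_zero] at hx
        exact one_ne_zero hx.symm
      exact Real.iInf_of_isEmpty _
    rw [h1, h2, _root_.inv_zero]
  · haveI : Nonempty (Fin n) := Fin.pos_iff_nonempty.mp hn
    have hd : IsUnit T.det := (Matrix.isUnit_iff_isUnit_det T).mp hT
    set g := eL T with hg
    set gi := eL T⁻¹ with hgi
    have hgig : ∀ x, gi (g x) = x := fun x => by
      rw [hg, hgi, ← eL_mul, Matrix.nonsing_inv_mul T hd, eL_one]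
    have hggi : ∀ y, g (gi y) = y := fun y => by
      rw [hg, hgi, ← eL_mul, Matrix.mul_nonsing_inv T hd, eL_one]
    obtain ⟨y₀, hy₀mem, hy₀max⟩ :=
      (isCompact_sphere (0 : EuclideanSpace ℝ (Fin n)) 1).exists_isMaxOn
        (NormedSpace.sphere_nonempty.mpr zero_le_one)
        ((continuous_norm.comp gi.continuous).continuousOn)
    have hy₀ : ‖y₀‖ = 1 := by simpa [mem_sphere_zero_iff_norm] using hy₀mem
    have hnorm_gi : ‖gi‖ = ‖gi y₀‖ := by
      refine le_antisymm (gi.opNorm_le_bound (norm_nonneg _) fun x => ?_) ?_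
      · rcases eq_or_ne x 0 with rfl | hx
        · simp
        · have hxn : ‖x‖ ≠ 0 := norm_ne_zero_iff.mpr hx
          have hu1 : ‖(‖x‖⁻¹ • x)‖ = 1 := by
            rw [norm_smul, norm_inv, norm_norm, inv_mul_cancel₀ hxn]
          have hle : ‖gi (‖x‖⁻¹ • x)‖ ≤ ‖gi y₀‖ := hy₀max (mem_sphere_zero_iff_norm.mpr hu1)
          rw [gi.map_smul, norm_smul, norm_inv, norm_norm] at hle
          calc ‖gi x‖ = ‖x‖ * (‖x‖⁻¹ * ‖gi x‖) := by field_simp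
            _ ≤ ‖x‖ * ‖gi y₀‖ := mul_le_mul_of_nonneg_left hle (norm_nonneg x)
            _ = ‖gi y₀‖ * ‖x‖ := mul_comm _ _
      · calc ‖gi y₀‖ ≤ ‖gi‖ * ‖y₀‖ := gi.le_opNorm y₀
          _ = ‖gi‖ := by rw [hy₀, mul_one]
    have hgi_pos : 0 < ‖gi y₀‖ := by
      rcases (norm_nonneg (gi y₀)).lt_or_eq with h | h
      · exact h
      · exfalso
        have h0 : gi y₀ = 0 := norm_eq_zero.mp h.symm
        have : y₀ = 0 := by rw [← hggi y₀, h0, map_zero]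
        rw [this, norm_zero] at hy₀
        exact one_ne_zero hy₀.symm
    have hpos : 0 < ‖gi‖ := by rw [hnorm_gi]; exact hgi_pos
    haveI hnsub : Nonempty {x : EuclideanSpace ℝ (Fin n) // ‖x‖ = 1} := ⟨⟨y₀, hy₀⟩⟩
    have hsmin : smin T = ‖gi‖⁻¹ := by
      rw [smin_eL]
      apply le_antisymm
      · set u : EuclideanSpace ℝ (Fin n) := ‖gi y₀‖⁻¹ • gi y₀ with hu
        have hu1 : ‖u‖ = 1 := by
          rw [hu, norm_smul, norm_inv, norm_norm, inv_mul_cancel₀ hgi_pos.ne']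
        have hgu : ‖g u‖ = ‖gi‖⁻¹ := by
          rw [hu, g.map_smul, hggi, norm_smul, norm_inv, norm_norm, hy₀, mul_one, hnorm_gi]
        refine le_of_le_of_eq (ciInf_le (f := fun x : {x : EuclideanSpace ℝ (Fin n) // ‖x‖ = 1} =>
          ‖eL T x.1‖) ⟨0, ?_⟩ ⟨u, hu1⟩) hgu
        rintro r ⟨i, rfl⟩
        exact norm_nonneg _
      · refine le_ciInf fun x : {x : EuclideanSpace ℝ (Fin n) // ‖x‖ = 1} => ?_
        have h1 : (1 : ℝ) ≤ ‖gi‖ * ‖g x.1‖ := by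
          calc (1 : ℝ) = ‖x.1‖ := x.2.symm
            _ = ‖gi (g x.1)‖ := by rw [hgig]
            _ ≤ ‖gi‖ * ‖g x.1‖ := gi.le_opNorm _
        rw [← one_div, div_le_iff₀ hpos]
        linarith [h1, mul_comm ‖gi‖ ‖g x.1‖]
    rw [hsmin, inv_inv]
    exact spec_eL T⁻¹

lemma cond2_inv {n : ℕ} (T : Matrix (Fin n) (Fin n) ℝ) (hT : IsUnit T) :
    cond2 T⁻¹ = cond2 T := by
  have hd : IsUnit T.det := (Matrix.isUnit_iff_isUnit_det T).mp hT
  have hTi : IsUnit T⁻¹ := (Matrix.isUnit_iff_isUnit_det _).mpr (Matrix.isUnit_nonsing_inv_det T hd)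
  have h1 : spec T⁻¹ = (smin T)⁻¹ := spec_inv T hT
  have h2 : spec T⁻¹⁻¹ = (smin T⁻¹)⁻¹ := spec_inv T⁻¹ hTi
  rw [Matrix.nonsing_inv_nonsing_inv T hd] at h2
  have h3 : smin T⁻¹ = (spec T)⁻¹ := by rw [← inv_inv (smin T⁻¹), ← h2]
  rw [cond2, cond2, h1, h3, div_eq_mul_inv, inv_inv, mul_comm, ← div_eq_mul_inv]


theorem stmt0 {m n s : ℕ} (hs : n ≤ s)
    (A : Matrix (Fin m) (Fin n) ℝ) (S : Matrix (Fin s) (Fin m) ℝ)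
    (hA : fullColRank A) (hS : LinearIndependent ℝ (fun i : Fin s => S i))
    (QA : Matrix (Fin m) (Fin n) ℝ) (RA : Matrix (Fin n) (Fin n) ℝ)
    (hQA : orthonormalCols QA) (hRA : upperTri RA) (hRAinv : IsUnit RA)
    (hAQR : A = QA * RA)
    (Q : Matrix (Fin s) (Fin n) ℝ) (R : Matrix (Fin n) (Fin n) ℝ)
    (hQ : orthonormalCols Q) (hR : upperTri R) (hRinv : IsUnit R)
    (hSAQR : S * A = Q * R) :
    cond2 (A * R⁻¹) = cond2 (S * QA) := by
  have hRAd : IsUnit RA.det := (Matrix.isUnit_iff_isUnit_det RA).mp hRAinv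
  have hRd : IsUnit R.det := (Matrix.isUnit_iff_isUnit_det R).mp hRinv
  have hRid : IsUnit (R⁻¹).det := Matrix.isUnit_nonsing_inv_det R hRd
  set T : Matrix (Fin n) (Fin n) ℝ := RA * R⁻¹ with hT
  have hTd : IsUnit T.det := by
    rw [hT, Matrix.det_mul]; exact hRAd.mul hRid
  have hTu : IsUnit T := (Matrix.isUnit_iff_isUnit_det T).mpr hTd
  have h1 : A * R⁻¹ = QA * T := by rw [hAQR, Matrix.mul_assoc]
  have hSQARA : S * QA * RA = Q * R := by rw [Matrix.mul_assoc, ← hAQR, hSAQR]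
  have h2 : S * QA = Q * T⁻¹ := by
    have hTinv : T⁻¹ = R * RA⁻¹ := by
      rw [hT, Matrix.mul_inv_rev, Matrix.nonsing_inv_nonsing_inv R hRd]
    rw [hTinv, ← Matrix.mul_assoc, ← hSQARA, Matrix.mul_assoc, Matrix.mul_nonsing_inv RA hRAd, Matrix.mul_one]
  rw [h1, h2, cond2_orth_mul hQA, cond2_orth_mul hQ, cond2_inv T hTu]
end

section
/- Let Q be an s×n matrix with orthonormal columns, R an invertible n×n matrix, and E an s×n matrix. Suppose Q̃ is an s×n matrix with orthonormal columns and R̂ an n×n matrix with Q̃ R̂ = Q R + E. Define ε₁ = ‖E‖₂‖R⁻¹‖₂ and assume ε₁ < 1. Then R̂ is invertible and κ₂(R̂) ≤ (κ₂(R) + ε₁)/(1 − ε₁). -/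
open Matrix BigOperators

section Aux

lemma spec_nonneg {m n : ℕ} (A : Matrix (Fin m) (Fin n) ℝ) : 0 ≤ spec A := norm_nonneg _

lemma spec_apply_le {m n : ℕ} (A : Matrix (Fin m) (Fin n) ℝ) (x : EuclideanSpace ℝ (Fin n)) :
    ‖Matrix.toEuclideanLin A x‖ ≤ spec A * ‖x‖ :=
  (LinearMap.toContinuousLinearMap (Matrix.toEuclideanLin A :
    EuclideanSpace ℝ (Fin n) →ₗ[ℝ] EuclideanSpace ℝ (Fin m))).le_opNorm x

lemma spec_le_bound {m n : ℕ} (A : Matrix (Fin m) (Fin n) ℝ) (c : ℝ) (hc : 0 ≤ c)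
    (h : ∀ x : EuclideanSpace ℝ (Fin n), ‖Matrix.toEuclideanLin A x‖ ≤ c * ‖x‖) :
    spec A ≤ c :=
  ContinuousLinearMap.opNorm_le_bound _ hc h

lemma spec_add_le {m n : ℕ} (A B : Matrix (Fin m) (Fin n) ℝ) :
    spec (A + B) ≤ spec A + spec B := by
  open scoped Matrix.Norms.L2Operator in exact norm_add_le A B

lemma toEuclideanLin_mul_apply {m n k : ℕ} (A : Matrix (Fin m) (Fin n) ℝ)
    (B : Matrix (Fin n) (Fin k) ℝ) (x : EuclideanSpace ℝ (Fin k)) :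
    Matrix.toEuclideanLin (A * B) x = Matrix.toEuclideanLin A (Matrix.toEuclideanLin B x) := by
  simp [Matrix.toEuclideanLin_apply, Matrix.mulVec_mulVec]

lemma norm_orthonormal {m n : ℕ} (Q : Matrix (Fin m) (Fin n) ℝ) (hQ : Qᵀ * Q = 1)
    (x : EuclideanSpace ℝ (Fin n)) : ‖Matrix.toEuclideanLin Q x‖ = ‖x‖ := by
  have h2 : (Qᵀ : Matrix (Fin n) (Fin m) ℝ) = Qᴴ := by
    ext i j; simp [Matrix.conjTranspose_apply]
  have h1 : Matrix.toEuclideanLin (Qᵀ * Q) x = x := by rw [hQ]; simp [Matrix.toEuclideanLin_apply]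
  have key : (inner ℝ (Matrix.toEuclideanLin Q x) (Matrix.toEuclideanLin Q x) : ℝ)
      = inner ℝ x x := by
    rw [← LinearMap.adjoint_inner_left, ← Matrix.toEuclideanLin_conjTranspose_eq_adjoint,
      ← h2, ← toEuclideanLin_mul_apply, h1]
  have h3 := real_inner_self_eq_norm_sq (Matrix.toEuclideanLin Q x)
  have h4 := real_inner_self_eq_norm_sq x
  rw [key, h4] at h3
  nlinarith [norm_nonneg ((Matrix.toEuclideanLin Q) x), norm_nonneg x]

lemma sphere_nonempty {n : ℕ} (hn : 0 < n) :
    Nonempty {x : EuclideanSpace ℝ (Fin n) // ‖x‖ = 1} :=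
  ⟨⟨EuclideanSpace.single ⟨0, hn⟩ (1:ℝ), by simp⟩⟩

lemma smin_bdd {m n : ℕ} (A : Matrix (Fin m) (Fin n) ℝ) :
    BddBelow (Set.range fun x : {x : EuclideanSpace ℝ (Fin n) // ‖x‖ = 1} =>
      ‖Matrix.toEuclideanLin A x.1‖) :=
  ⟨0, by rintro y ⟨x, rfl⟩; exact norm_nonneg _⟩

lemma smin_le {m n : ℕ} (A : Matrix (Fin m) (Fin n) ℝ) (x : EuclideanSpace ℝ (Fin n))
    (hx : ‖x‖ = 1) : smin A ≤ ‖Matrix.toEuclideanLin A x‖ :=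
  ciInf_le (smin_bdd A) ⟨x, hx⟩

lemma le_smin {m n : ℕ} (hn : 0 < n) (A : Matrix (Fin m) (Fin n) ℝ) (c : ℝ)
    (h : ∀ x : EuclideanSpace ℝ (Fin n), ‖x‖ = 1 → c ≤ ‖Matrix.toEuclideanLin A x‖) :
    c ≤ smin A := by
  have := sphere_nonempty hn
  exact le_ciInf fun x => h x.1 x.2

lemma sphere_empty_zero : IsEmpty {x : EuclideanSpace ℝ (Fin 0) // ‖x‖ = 1} := by
  constructor; rintro ⟨x, hx⟩
  have : x = 0 := Subsingleton.elim _ _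
  simp [this] at hx

lemma smin_nonneg {m n : ℕ} (A : Matrix (Fin m) (Fin n) ℝ) : 0 ≤ smin A := by
  rcases Nat.eq_zero_or_pos n with h | h
  · subst h
    have := sphere_empty_zero
    rw [smin, Real.iInf_of_isEmpty]
  · exact le_smin h A 0 fun x _ => norm_nonneg _

lemma smin_mul_le {m n : ℕ} (A : Matrix (Fin m) (Fin n) ℝ) (x : EuclideanSpace ℝ (Fin n)) :
    smin A * ‖x‖ ≤ ‖Matrix.toEuclideanLin A x‖ := by
  rcases eq_or_ne x 0 with rfl | hx
  · simp
  · have hnx : ‖x‖ ≠ 0 := norm_ne_zero_iff.2 hx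
    have h1 : ‖(‖x‖⁻¹ : ℝ) • x‖ = 1 := by
      rw [norm_smul]; simp [hnx]
    have := smin_le A _ h1
    rw [_root_.map_smul, norm_smul] at this
    simp only [norm_inv, norm_norm] at this
    rw [le_inv_mul_iff₀ (by positivity)] at this
    linarith [this]

end Aux

theorem stmt2 {s n : ℕ} (Q : Matrix (Fin s) (Fin n) ℝ) (R : Matrix (Fin n) (Fin n) ℝ)
    (E : Matrix (Fin s) (Fin n) ℝ) (Qt : Matrix (Fin s) (Fin n) ℝ)
    (Rh : Matrix (Fin n) (Fin n) ℝ)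
    (hQ : orthonormalCols Q) (hR : IsUnit R) (hQt : orthonormalCols Qt)
    (hfac : Qt * Rh = Q * R + E)
    (ε₁ : ℝ) (hε₁ : ε₁ = spec E * spec R⁻¹) (hε₁lt : ε₁ < 1) :
    IsUnit Rh ∧ cond2 Rh ≤ (cond2 R + ε₁) / (1 - ε₁) := by
  have hε₁0 : 0 ≤ ε₁ := by
    rw [hε₁]; exact mul_nonneg (spec_nonneg _) (spec_nonneg _)
  rcases Nat.eq_zero_or_pos n with hn | hn
  · subst hn
    constructor
    · have : Rh = 1 := Subsingleton.elim _ _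
      rw [this]; exact isUnit_one
    · have hE := sphere_empty_zero
      have hz : ∀ M : Matrix (Fin 0) (Fin 0) ℝ, cond2 M = 0 := by
        intro M
        rw [cond2, smin, Real.iInf_of_isEmpty, div_zero]
      rw [hz, hz]
      apply div_nonneg <;> linarith
  -- main case
  set a := spec R with ha
  set b := smin R with hb
  set e := spec E with he
  set r := spec R⁻¹ with hr
  have ha0 : 0 ≤ a := spec_nonneg _
  have he0 : 0 ≤ e := spec_nonneg _
  have hr0 : 0 ≤ r := spec_nonneg _
  have hb0 : 0 ≤ b := smin_nonneg _
  have hRinv : R⁻¹ * R = 1 := Matrix.nonsing_inv_mul R (Matrix.isUnit_iff_isUnit_det R |>.1 hR)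
  -- b * r ≥ 1
  have hbr : 1 ≤ b * r := by
    -- for unit x : 1 = ‖x‖ ≤ r * ‖R x‖
    have key : ∀ x : EuclideanSpace ℝ (Fin n), ‖x‖ = 1 →
        1 ≤ r * ‖Matrix.toEuclideanLin R x‖ := by
      intro x hx
      have h1 : Matrix.toEuclideanLin R⁻¹ (Matrix.toEuclideanLin R x) = x := by
        rw [← toEuclideanLin_mul_apply, hRinv]
        simp [Matrix.toEuclideanLin_apply]
      have := spec_apply_le R⁻¹ (Matrix.toEuclideanLin R x)
      rw [h1, hx] at this
      exact this
    have hrpos : 0 < r := by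
      rcases (sphere_nonempty hn) with ⟨x⟩
      have hk := key x.1 x.2
      by_contra h
      push_neg at h
      nlinarith [norm_nonneg (Matrix.toEuclideanLin R x.1)]
    have hinv : r⁻¹ ≤ b := by
      apply le_smin hn
      intro x hx
      have hk := key x hx
      rw [inv_le_iff_one_le_mul₀ hrpos]
      calc (1:ℝ) ≤ r * ‖Matrix.toEuclideanLin R x‖ := hk
        _ = ‖Matrix.toEuclideanLin R x‖ * r := mul_comm _ _
    calc (1:ℝ) = r⁻¹ * r := (inv_mul_cancel₀ (ne_of_gt hrpos)).symm
      _ ≤ b * r := by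
        apply mul_le_mul_of_nonneg_right hinv hr0
  have hrpos : 0 < r := by nlinarith
  have hbpos : 0 < b := by nlinarith
  have heb : e ≤ ε₁ * b := by rw [hε₁]; nlinarith
  -- spec Rh ≤ a + e
  have hQR : spec (Q * R) ≤ a := by
    apply spec_le_bound _ _ ha0
    intro x
    rw [toEuclideanLin_mul_apply, norm_orthonormal Q hQ]
    exact spec_apply_le R x
  have hspecRh : spec Rh ≤ a + e := by
    have h1 : spec Rh ≤ spec (Qt * Rh) := by
      apply spec_le_bound _ _ (spec_nonneg _)
      intro x
      rw [← norm_orthonormal Qt hQt (Matrix.toEuclideanLin Rh x), ← toEuclideanLin_mul_apply]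
      exact spec_apply_le _ x
    have h2 : spec (Qt * Rh) ≤ a + e := by
      rw [hfac]
      calc spec (Q * R + E) ≤ spec (Q * R) + spec E := spec_add_le _ _
        _ ≤ a + e := by rw [← he]; linarith
    linarith
  -- smin Rh ≥ b - e
  have hsminRh : b - e ≤ smin Rh := by
    apply le_smin hn
    intro x hx
    have h1 : ‖Matrix.toEuclideanLin Rh x‖ = ‖Matrix.toEuclideanLin (Q * R + E) x‖ := by
      rw [← hfac, toEuclideanLin_mul_apply, norm_orthonormal Qt hQt]
    have h2 : Matrix.toEuclideanLin (Q * R + E) x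
        = Matrix.toEuclideanLin (Q * R) x + Matrix.toEuclideanLin E x := by
      rw [map_add]; rfl
    have h3 : ‖Matrix.toEuclideanLin (Q * R) x‖ = ‖Matrix.toEuclideanLin R x‖ := by
      rw [toEuclideanLin_mul_apply, norm_orthonormal Q hQ]
    have h4 : b ≤ ‖Matrix.toEuclideanLin R x‖ := smin_le R x hx
    have h5 : ‖Matrix.toEuclideanLin E x‖ ≤ e := by
      have := spec_apply_le E x
      rw [hx] at this; simpa using this
    have h6 : ‖Matrix.toEuclideanLin (Q * R) x‖ ≤
        ‖Matrix.toEuclideanLin (Q * R) x + Matrix.toEuclideanLin E x‖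
          + ‖Matrix.toEuclideanLin E x‖ := by
      calc ‖Matrix.toEuclideanLin (Q * R) x‖
          = ‖(Matrix.toEuclideanLin (Q * R) x + Matrix.toEuclideanLin E x)
              - Matrix.toEuclideanLin E x‖ := by rw [add_sub_cancel_right]
        _ ≤ _ := norm_sub_le _ _
    rw [h1, h2]
    rw [h3] at h6
    linarith
  have hsminpos : 0 < smin Rh := by nlinarith
  constructor
  · -- invertibility
    rw [Matrix.isUnit_iff_isUnit_det, isUnit_iff_ne_zero]
    intro hdet
    obtain ⟨v, hv0, hv⟩ := (Matrix.exists_mulVec_eq_zero_iff).2 hdet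
    set x : EuclideanSpace ℝ (Fin n) := (WithLp.equiv 2 (Fin n → ℝ)).symm v with hxdef
    have hxe : Matrix.toEuclideanLin Rh x = 0 := by
      rw [Matrix.toEuclideanLin_apply, hxdef]
      show WithLp.toLp 2 (Rh *ᵥ v) = 0
      rw [hv]
      rfl
    have hxne : x ≠ 0 := by
      intro h0
      apply hv0
      apply (WithLp.equiv 2 (Fin n → ℝ)).symm.injective
      exact h0
    have hxpos : 0 < ‖x‖ := norm_pos_iff.2 hxne
    have := smin_mul_le Rh x
    rw [hxe] at this
    simp only [norm_zero] at this
    nlinarith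
  · -- condition number bound
    have hcondR : cond2 R = a / b := rfl
    have hcondRh : cond2 Rh = spec Rh / smin Rh := rfl
    rw [hcondR, hcondRh]
    have hden : 0 < b * (1 - ε₁) := mul_pos hbpos (by linarith)
    have h1 : spec Rh / smin Rh ≤ (a + e) / (b * (1 - ε₁)) := by
      apply div_le_div₀ (by linarith) hspecRh hden
      calc b * (1 - ε₁) = b - ε₁ * b := by ring
        _ ≤ b - e := by linarith
        _ ≤ smin Rh := hsminRh
    have hnum : (a + e) / b ≤ a / b + ε₁ := by
      rw [add_div]
      have : e / b ≤ ε₁ := (div_le_iff₀ hbpos).2 (by linarith)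
      linarith
    have h2 : (a + e) / (b * (1 - ε₁)) ≤ (a / b + ε₁) / (1 - ε₁) := by
      rw [← div_div]
      exact div_le_div_of_nonneg_right hnum (by linarith)
    linarith
end

section
/- Let A be an m×n full column rank matrix with economized QR factorization A = Q_A R_A, let S be an s×m matrix such that S Q_A has full column rank, and let R be the invertible triangular factor of an economized QR factorization SA = QR. Suppose R̂ is an invertible n×n matrix with ‖Q̃ R̂ − Q R‖₂ ‖R⁻¹‖₂ = ε₁ < 1 for some Q̃ with orthonormal columns. Then for every vector v ∈ ℝᵐ, ‖vᵀ A R⁻¹‖₂ / (1 + ε₁) ≤ ‖vᵀ A R̂⁻¹‖₂ ≤ ‖vᵀ A R⁻¹‖₂ / (1 − ε₁), and consequently κ₂(A R̂⁻¹) ≤ κ₂(S Q_A) · (1 + ε₁)/(1 − ε₁). -/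
open Matrix BigOperators

section Helpers

open scoped Matrix.Norms.L2Operator

/-- Bundle a plain vector into Euclidean space. -/
noncomputable def euc {k : ℕ} (v : Fin k → ℝ) : EuclideanSpace ℝ (Fin k) :=
  (WithLp.equiv 2 _).symm v

/-- The continuous linear map attached to a matrix. -/
noncomputable def phi {a b : ℕ} (X : Matrix (Fin a) (Fin b) ℝ) :
    EuclideanSpace ℝ (Fin b) →L[ℝ] EuclideanSpace ℝ (Fin a) :=
  LinearMap.toContinuousLinearMap (Matrix.toEuclideanLin X)

lemma spec_eq {a b : ℕ} (X : Matrix (Fin a) (Fin b) ℝ) : spec X = ‖X‖ := rfl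

lemma smin_def {a b : ℕ} (X : Matrix (Fin a) (Fin b) ℝ) :
    smin X = ⨅ x : {x : EuclideanSpace ℝ (Fin b) // ‖x‖ = 1}, ‖phi X x.1‖ := rfl

lemma euc_dot {k : ℕ} (v : Fin k → ℝ) : ‖euc v‖ = Real.sqrt (v ⬝ᵥ v) := by
  rw [EuclideanSpace.norm_eq]
  congr 1
  simp [euc, dotProduct, Real.norm_eq_abs, sq_abs, sq]

lemma vnorm_eq {k : ℕ} (v : Fin k → ℝ) : vnorm v = ‖euc v‖ := by
  rw [euc_dot, vnorm]
  congr 1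
  simp [dotProduct, sq]

lemma orth_norm {a b : ℕ} {Q : Matrix (Fin a) (Fin b) ℝ} (hQ : orthonormalCols Q)
    (v : Fin b → ℝ) : ‖euc (Q *ᵥ v)‖ = ‖euc v‖ := by
  have hQ' : Qᵀ * Q = 1 := hQ
  rw [euc_dot, euc_dot]
  congr 1
  calc (Q *ᵥ v) ⬝ᵥ (Q *ᵥ v) = ((Q *ᵥ v) ᵥ* Q) ⬝ᵥ v := dotProduct_mulVec _ _ _
    _ = ((v ᵥ* Qᵀ) ᵥ* Q) ⬝ᵥ v := by rw [vecMul_transpose]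
    _ = (v ᵥ* (Qᵀ * Q)) ⬝ᵥ v := by rw [vecMul_vecMul]
    _ = v ⬝ᵥ v := by rw [hQ', vecMul_one]

lemma norm_phi_le {a b : ℕ} (X : Matrix (Fin a) (Fin b) ℝ) (v : Fin b → ℝ) :
    ‖euc (X *ᵥ v)‖ ≤ ‖X‖ * ‖euc v‖ := (phi X).le_opNorm (euc v)

lemma opnorm_le {a b : ℕ} (X : Matrix (Fin a) (Fin b) ℝ) {c : ℝ} (hc : 0 ≤ c)
    (h : ∀ v : Fin b → ℝ, ‖euc (X *ᵥ v)‖ ≤ c * ‖euc v‖) : ‖X‖ ≤ c :=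
  ContinuousLinearMap.opNorm_le_bound (phi X) hc (fun x => h ((WithLp.equiv 2 _) x))

lemma transpose_norm {a b : ℕ} (X : Matrix (Fin a) (Fin b) ℝ) : ‖Xᵀ‖ = ‖X‖ := by
  have h : Xᴴ = Xᵀ := by ext i j; simp [conjTranspose_apply]
  rw [← h, Matrix.l2_opNorm_conjTranspose]

lemma smin_le_norm {a b : ℕ} (X : Matrix (Fin a) (Fin b) ℝ) {w : Fin b → ℝ}
    (hw : ‖euc w‖ = 1) : smin X ≤ ‖euc (X *ᵥ w)‖ := by
  have hb : BddBelow (Set.range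
      (fun x : {x : EuclideanSpace ℝ (Fin b) // ‖x‖ = 1} => ‖phi X x.1‖)) :=
    ⟨0, fun z hz => by obtain ⟨y, rfl⟩ := hz; exact norm_nonneg _⟩
  have h2 : (⨅ x : {x : EuclideanSpace ℝ (Fin b) // ‖x‖ = 1}, ‖phi X x.1‖)
      ≤ ‖phi X (euc w)‖ := ciInf_le hb ⟨euc w, hw⟩
  rw [smin_def]
  exact h2

lemma le_smin_s5 {a b : ℕ} (X : Matrix (Fin a) (Fin b) ℝ) {c : ℝ}
    (hne : Nonempty {x : EuclideanSpace ℝ (Fin b) // ‖x‖ = 1})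
    (h : ∀ w : Fin b → ℝ, ‖euc w‖ = 1 → c ≤ ‖euc (X *ᵥ w)‖) : c ≤ smin X := by
  rw [smin_def]
  exact le_ciInf fun x => h ((WithLp.equiv 2 _) x.1) x.2

lemma smin_congr {a b c : ℕ} (X : Matrix (Fin a) (Fin b) ℝ) (Y : Matrix (Fin c) (Fin b) ℝ)
    (h : ∀ w : Fin b → ℝ, ‖euc (X *ᵥ w)‖ = ‖euc (Y *ᵥ w)‖) : smin X = smin Y := by
  rw [smin_def, smin_def]
  exact iInf_congr fun x => h ((WithLp.equiv 2 _) x.1)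

lemma smin_mul_le_s5 {a b : ℕ} (X : Matrix (Fin a) (Fin b) ℝ) (w : Fin b → ℝ) :
    smin X * ‖euc w‖ ≤ ‖euc (X *ᵥ w)‖ := by
  by_cases hw0 : w = 0
  · subst hw0
    have h0 : euc (0 : Fin b → ℝ) = 0 := rfl
    have h0a : euc (0 : Fin a → ℝ) = 0 := rfl
    rw [h0, mulVec_zero, h0a, norm_zero, norm_zero, mul_zero]
  · have hne : euc w ≠ 0 := fun h => hw0 (congrArg (WithLp.equiv 2 _) h)
    have hcw : 0 < ‖euc w‖ := norm_pos_iff.mpr hne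
    set c : ℝ := ‖euc w‖ with hc
    have hsm : euc (c⁻¹ • w) = c⁻¹ • euc w := rfl
    have hunit : ‖euc (c⁻¹ • w)‖ = 1 := by
      rw [hsm, norm_smul, Real.norm_eq_abs, abs_inv, abs_of_pos hcw]
      field_simp
      exact hc.symm
    have hle := smin_le_norm X hunit
    have heq : ‖euc (X *ᵥ (c⁻¹ • w))‖ = c⁻¹ * ‖euc (X *ᵥ w)‖ := by
      rw [mulVec_smul]
      have h3 : euc (c⁻¹ • (X *ᵥ w)) = c⁻¹ • euc (X *ᵥ w) := rfl
      rw [h3, norm_smul, Real.norm_eq_abs, abs_inv, abs_of_pos hcw]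
    rw [heq] at hle
    have h4 := mul_le_mul_of_nonneg_right hle hcw.le
    calc smin X * ‖euc w‖ = smin X * c := rfl
      _ ≤ (c⁻¹ * ‖euc (X *ᵥ w)‖) * c := h4
      _ = ‖euc (X *ᵥ w)‖ := by field_simp

end Helpers

open scoped Matrix.Norms.L2Operator

theorem stmt5 {m n s : ℕ} (A QA : Matrix (Fin m) (Fin n) ℝ)
    (RA : Matrix (Fin n) (Fin n) ℝ) (S : Matrix (Fin s) (Fin m) ℝ)
    (Q Qt : Matrix (Fin s) (Fin n) ℝ) (R Rh : Matrix (Fin n) (Fin n) ℝ)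
    (hA : fullColRank A) (hQA : orthonormalCols QA) (hRA : upperTri RA)
    (hAQR : A = QA * RA) (hSQA : fullColRank (S * QA))
    (hQ : orthonormalCols Q) (hR : upperTri R) (hRinv : IsUnit R)
    (hSAQR : S * A = Q * R)
    (hRh : IsUnit Rh) (hQt : orthonormalCols Qt)
    (ε₁ : ℝ) (hε₁ : spec (Qt * Rh - Q * R) * spec R⁻¹ = ε₁) (hε₁lt : ε₁ < 1) :
    (∀ v : Fin m → ℝ,
        vnorm (v ᵥ* (A * R⁻¹)) / (1 + ε₁) ≤ vnorm (v ᵥ* (A * Rh⁻¹)) ∧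
        vnorm (v ᵥ* (A * Rh⁻¹)) ≤ vnorm (v ᵥ* (A * R⁻¹)) / (1 - ε₁)) ∧
    cond2 (A * Rh⁻¹) ≤ cond2 (S * QA) * (1 + ε₁) / (1 - ε₁) := by
  classical
  have hε₀ : 0 ≤ ε₁ := by
    rw [← hε₁, spec_eq, spec_eq]; exact mul_nonneg (norm_nonneg _) (norm_nonneg _)
  have h1e : (0:ℝ) < 1 - ε₁ := by linarith
  have h2e : (0:ℝ) < 1 + ε₁ := by linarith
  have hdR : IsUnit R.det := (Matrix.isUnit_iff_isUnit_det R).mp hRinv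
  have hdRh : IsUnit Rh.det := (Matrix.isUnit_iff_isUnit_det Rh).mp hRh
  have hRR : R * R⁻¹ = 1 := Matrix.mul_nonsing_inv R hdR
  have hRR' : R⁻¹ * R = 1 := Matrix.nonsing_inv_mul R hdR
  have hRhR : Rh * Rh⁻¹ = 1 := Matrix.mul_nonsing_inv Rh hdRh
  have hRhR' : Rh⁻¹ * Rh = 1 := Matrix.nonsing_inv_mul Rh hdRh
  -- bound for N := Rh * R⁻¹
  have hE : Qt * (Rh * R⁻¹) = Q + (Qt * Rh - Q * R) * R⁻¹ := by
    rw [Matrix.sub_mul, Matrix.mul_assoc Q R, hRR, Matrix.mul_one, ← Matrix.mul_assoc]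
    abel
  have hNb : ∀ v : Fin n → ℝ, ‖euc ((Rh * R⁻¹) *ᵥ v)‖ ≤ (1 + ε₁) * ‖euc v‖ ∧
      (1 - ε₁) * ‖euc v‖ ≤ ‖euc ((Rh * R⁻¹) *ᵥ v)‖ := by
    intro v
    have h0 : ‖euc ((Rh * R⁻¹) *ᵥ v)‖
        = ‖euc (Q *ᵥ v) + euc (((Qt * Rh - Q * R) * R⁻¹) *ᵥ v)‖ := by
      rw [← orth_norm hQt ((Rh * R⁻¹) *ᵥ v), mulVec_mulVec, hE, add_mulVec]
      rfl
    have hQv : ‖euc (Q *ᵥ v)‖ = ‖euc v‖ := orth_norm hQ v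
    have hEb : ‖euc (((Qt * Rh - Q * R) * R⁻¹) *ᵥ v)‖ ≤ ε₁ * ‖euc v‖ := by
      refine le_trans (norm_phi_le _ v) ?_
      have h2 : ‖(Qt * Rh - Q * R) * R⁻¹‖ ≤ ε₁ := by
        rw [← hε₁, spec_eq, spec_eq]
        exact Matrix.l2_opNorm_mul _ _
      exact mul_le_mul_of_nonneg_right h2 (norm_nonneg _)
    constructor
    · rw [h0]
      have t1 := norm_add_le (euc (Q *ᵥ v)) (euc (((Qt * Rh - Q * R) * R⁻¹) *ᵥ v))
      rw [hQv] at t1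
      linarith
    · rw [h0]
      have t2 := norm_le_add_norm_add (euc (Q *ᵥ v)) (euc (((Qt * Rh - Q * R) * R⁻¹) *ᵥ v))
      rw [hQv] at t2
      linarith
  have hNK : (Rh * R⁻¹) * (R * Rh⁻¹) = 1 := by
    rw [mul_assoc, ← mul_assoc R⁻¹ R Rh⁻¹, hRR', one_mul, hRhR]
  have hKN : (R * Rh⁻¹) * (Rh * R⁻¹) = 1 := by
    rw [mul_assoc, ← mul_assoc Rh⁻¹ Rh R⁻¹, hRhR', one_mul, hRR]
  -- bounds for K := R * Rh⁻¹
  have hKid : ∀ v : Fin n → ℝ, (Rh * R⁻¹) *ᵥ ((R * Rh⁻¹) *ᵥ v) = v := by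
    intro v; rw [mulVec_mulVec, hNK, one_mulVec]
  have hK_up : ∀ v : Fin n → ℝ, ‖euc ((R * Rh⁻¹) *ᵥ v)‖ ≤ ‖euc v‖ / (1 - ε₁) := by
    intro v
    have := (hNb ((R * Rh⁻¹) *ᵥ v)).2
    rw [hKid v] at this
    rw [le_div_iff₀ h1e]
    linarith
  have hK_lo : ∀ v : Fin n → ℝ, ‖euc v‖ / (1 + ε₁) ≤ ‖euc ((R * Rh⁻¹) *ᵥ v)‖ := by
    intro v
    have := (hNb ((R * Rh⁻¹) *ᵥ v)).1
    rw [hKid v] at this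
    rw [div_le_iff₀ h2e]
    linarith
  have hNnorm : ‖Rh * R⁻¹‖ ≤ 1 + ε₁ := opnorm_le _ h2e.le (fun v => (hNb v).1)
  have hKnorm : ‖R * Rh⁻¹‖ ≤ (1 - ε₁)⁻¹ := by
    refine opnorm_le _ (inv_nonneg.mpr h1e.le) (fun v => ?_)
    rw [inv_mul_eq_div]
    exact hK_up v
  -- Part 1
  have part1 : ∀ v : Fin m → ℝ,
      vnorm (v ᵥ* (A * R⁻¹)) / (1 + ε₁) ≤ vnorm (v ᵥ* (A * Rh⁻¹)) ∧
      vnorm (v ᵥ* (A * Rh⁻¹)) ≤ vnorm (v ᵥ* (A * R⁻¹)) / (1 - ε₁) := by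
    intro v
    have e1 : v ᵥ* (A * R⁻¹) = (R⁻¹)ᵀ *ᵥ (v ᵥ* A) := by
      rw [← vecMul_vecMul]; exact (mulVec_transpose _ _).symm
    have e2 : v ᵥ* (A * Rh⁻¹) = (Rh⁻¹)ᵀ *ᵥ (v ᵥ* A) := by
      rw [← vecMul_vecMul]; exact (mulVec_transpose _ _).symm
    set u := v ᵥ* A with hu
    have hid : (Rh * R⁻¹)ᵀ *ᵥ ((Rh⁻¹)ᵀ *ᵥ u) = (R⁻¹)ᵀ *ᵥ u := by
      rw [mulVec_mulVec, ← transpose_mul, ← mul_assoc, hRhR', one_mul]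
    have hid2 : (R * Rh⁻¹)ᵀ *ᵥ ((R⁻¹)ᵀ *ᵥ u) = (Rh⁻¹)ᵀ *ᵥ u := by
      rw [mulVec_mulVec, ← transpose_mul, ← mul_assoc, hRR', one_mul]
    have up : ‖euc ((R⁻¹)ᵀ *ᵥ u)‖ ≤ (1 + ε₁) * ‖euc ((Rh⁻¹)ᵀ *ᵥ u)‖ := by
      rw [← hid]
      refine le_trans (norm_phi_le _ _) ?_
      refine mul_le_mul_of_nonneg_right ?_ (norm_nonneg _)
      rw [transpose_norm]; exact hNnorm
    have lo : (1 - ε₁) * ‖euc ((Rh⁻¹)ᵀ *ᵥ u)‖ ≤ ‖euc ((R⁻¹)ᵀ *ᵥ u)‖ := by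
      have b1 : ‖euc ((R * Rh⁻¹)ᵀ *ᵥ ((R⁻¹)ᵀ *ᵥ u))‖ ≤ (1 - ε₁)⁻¹ * ‖euc ((R⁻¹)ᵀ *ᵥ u)‖ := by
        refine le_trans (norm_phi_le _ _) ?_
        refine mul_le_mul_of_nonneg_right ?_ (norm_nonneg _)
        rw [transpose_norm]; exact hKnorm
      rw [hid2] at b1
      have hcc : (1 - ε₁) * (1 - ε₁)⁻¹ = 1 := mul_inv_cancel₀ h1e.ne'
      nlinarith [norm_nonneg (euc ((R⁻¹)ᵀ *ᵥ u))]
    rw [e1, e2, vnorm_eq, vnorm_eq]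
    constructor
    · rw [div_le_iff₀ h2e]; linarith
    · rw [le_div_iff₀ h1e]; linarith
  refine ⟨part1, ?_⟩
  -- Part 2
  rcases Nat.eq_zero_or_pos n with hn | hn
  · subst hn
    haveI hie : IsEmpty {x : EuclideanSpace ℝ (Fin 0) // ‖x‖ = 1} := by
      refine ⟨fun x => ?_⟩
      have h0 : x.1 = 0 := by ext i; exact Fin.elim0 i
      have h1 := x.2
      rw [h0, norm_zero] at h1
      exact one_ne_zero h1.symm
    have hs0 : smin (A * Rh⁻¹) = 0 := Real.iInf_of_isEmpty _
    unfold cond2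
    rw [hs0, div_zero]
    have c2 : (0:ℝ) ≤ spec (S * QA) / smin (S * QA) :=
      div_nonneg (by rw [spec_eq]; exact norm_nonneg _)
        (Real.iInf_nonneg fun x => norm_nonneg _)
    exact div_nonneg (mul_nonneg c2 h2e.le) h1e.le
  · -- n > 0 : invertibility of RA
    have hAinj : ∀ x : Fin n → ℝ, A *ᵥ x = 0 → x = 0 := by
      intro x hx
      have hsum : ∑ j, x j • Aᵀ j = 0 := by
        funext i
        rw [Finset.sum_apply]
        simpa [Matrix.mulVec, dotProduct, mul_comm] using congrFun hx i
      have h := Fintype.linearIndependent_iff.mp hA x hsum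
      funext j; exact h j
    have hRAinj : Function.Injective (RA.mulVec) := by
      intro x y hxy
      have h0 : RA *ᵥ (x - y) = 0 := by rw [mulVec_sub, hxy, sub_self]
      have h1 : A *ᵥ (x - y) = 0 := by
        rw [hAQR, ← mulVec_mulVec, h0, mulVec_zero]
      exact sub_eq_zero.mp (hAinj _ h1)
    have hRAu : IsUnit RA := Matrix.mulVec_injective_iff_isUnit.mp hRAinj
    have hdRA : IsUnit RA.det := (Matrix.isUnit_iff_isUnit_det RA).mp hRAu
    have hRARA : RA * RA⁻¹ = 1 := Matrix.mul_nonsing_inv RA hdRA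
    have hRARA' : RA⁻¹ * RA = 1 := Matrix.nonsing_inv_mul RA hdRA
    have hPM : (RA * R⁻¹) * (R * RA⁻¹) = 1 := by
      rw [mul_assoc, ← mul_assoc R⁻¹ R RA⁻¹, hRR', one_mul, hRARA]
    have hMP : (R * RA⁻¹) * (RA * R⁻¹) = 1 := by
      rw [mul_assoc, ← mul_assoc RA⁻¹ RA R⁻¹, hRARA', one_mul, hRR]
    have hARh : A * Rh⁻¹ = QA * ((RA * R⁻¹) * (R * Rh⁻¹)) := by
      have h1 : (RA * R⁻¹) * (R * Rh⁻¹) = RA * Rh⁻¹ := by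
        rw [mul_assoc, ← mul_assoc R⁻¹ R Rh⁻¹, hRR', one_mul]
      rw [hAQR, h1, Matrix.mul_assoc]
    have hSQAeq : S * QA = Q * (R * RA⁻¹) := by
      have h1 : (S * QA) * RA = Q * R := by rw [Matrix.mul_assoc, ← hAQR, hSAQR]
      calc S * QA = (S * QA) * (RA * RA⁻¹) := by rw [hRARA, Matrix.mul_one]
        _ = ((S * QA) * RA) * RA⁻¹ := (Matrix.mul_assoc _ _ _).symm
        _ = (Q * R) * RA⁻¹ := by rw [h1]
        _ = Q * (R * RA⁻¹) := Matrix.mul_assoc _ _ _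
    -- pointwise norms
    have hval : ∀ w : Fin n → ℝ, ‖euc ((A * Rh⁻¹) *ᵥ w)‖
        = ‖euc ((RA * R⁻¹) *ᵥ ((R * Rh⁻¹) *ᵥ w))‖ := by
      intro w
      calc ‖euc ((A * Rh⁻¹) *ᵥ w)‖
          = ‖euc (QA *ᵥ (((RA * R⁻¹) * (R * Rh⁻¹)) *ᵥ w))‖ := by
            rw [mulVec_mulVec, hARh]
        _ = ‖euc (((RA * R⁻¹) * (R * Rh⁻¹)) *ᵥ w)‖ := orth_norm hQA _
        _ = ‖euc ((RA * R⁻¹) *ᵥ ((R * Rh⁻¹) *ᵥ w))‖ := by rw [mulVec_mulVec]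
    have hSval : ∀ w : Fin n → ℝ, ‖euc ((S * QA) *ᵥ w)‖ = ‖euc ((R * RA⁻¹) *ᵥ w)‖ := by
      intro w
      calc ‖euc ((S * QA) *ᵥ w)‖ = ‖euc (Q *ᵥ ((R * RA⁻¹) *ᵥ w))‖ := by
            rw [mulVec_mulVec, hSQAeq]
        _ = ‖euc ((R * RA⁻¹) *ᵥ w)‖ := orth_norm hQ _
    -- unit vector
    have heu : ‖euc (Pi.single (⟨0, hn⟩ : Fin n) (1:ℝ))‖ = 1 := by
      rw [euc_dot]
      rw [show (Pi.single (⟨0, hn⟩ : Fin n) (1:ℝ)) ⬝ᵥ (Pi.single (⟨0, hn⟩ : Fin n) (1:ℝ)) = 1 by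
        simp [dotProduct, Pi.single_apply]]
      exact Real.sqrt_one
    haveI hnne : Nonempty {x : EuclideanSpace ℝ (Fin n) // ‖x‖ = 1} :=
      ⟨⟨euc (Pi.single (⟨0, hn⟩ : Fin n) (1:ℝ)), heu⟩⟩
    -- positivity of ‖M‖ and ‖P‖
    have hMP_one : (1:ℝ) ≤ ‖R * RA⁻¹‖ * (‖RA * R⁻¹‖ * 1) := by
      have h1 : euc (Pi.single (⟨0, hn⟩ : Fin n) (1:ℝ))
          = euc ((R * RA⁻¹) *ᵥ ((RA * R⁻¹) *ᵥ (Pi.single (⟨0, hn⟩ : Fin n) (1:ℝ)))) := by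
        rw [mulVec_mulVec, hMP, one_mulVec]
      calc (1:ℝ) = ‖euc (Pi.single (⟨0, hn⟩ : Fin n) (1:ℝ))‖ := heu.symm
        _ = ‖euc ((R * RA⁻¹) *ᵥ ((RA * R⁻¹) *ᵥ _))‖ := by rw [← h1]
        _ ≤ ‖R * RA⁻¹‖ * ‖euc ((RA * R⁻¹) *ᵥ _)‖ := norm_phi_le _ _
        _ ≤ ‖R * RA⁻¹‖ * (‖RA * R⁻¹‖ * ‖euc (Pi.single (⟨0, hn⟩ : Fin n) (1:ℝ))‖) := by
            exact mul_le_mul_of_nonneg_left (norm_phi_le _ _) (norm_nonneg _)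
        _ = ‖R * RA⁻¹‖ * (‖RA * R⁻¹‖ * 1) := by rw [heu]
    have hM0 : 0 < ‖R * RA⁻¹‖ := by
      by_contra h
      push_neg at h
      have : ‖R * RA⁻¹‖ = 0 := le_antisymm h (norm_nonneg _)
      rw [this, zero_mul] at hMP_one
      linarith
    have hP0 : 0 < ‖RA * R⁻¹‖ := by
      by_contra h
      push_neg at h
      have : ‖RA * R⁻¹‖ = 0 := le_antisymm h (norm_nonneg _)
      rw [this, zero_mul, mul_zero] at hMP_one
      linarith
    -- spec bound
    have hspec : spec (A * Rh⁻¹) ≤ ‖RA * R⁻¹‖ / (1 - ε₁) := by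
      rw [spec_eq]
      refine opnorm_le _ (div_nonneg (norm_nonneg _) h1e.le) (fun w => ?_)
      rw [hval w]
      calc ‖euc ((RA * R⁻¹) *ᵥ ((R * Rh⁻¹) *ᵥ w))‖
          ≤ ‖RA * R⁻¹‖ * ‖euc ((R * Rh⁻¹) *ᵥ w)‖ := norm_phi_le _ _
        _ ≤ ‖RA * R⁻¹‖ * (‖euc w‖ / (1 - ε₁)) :=
            mul_le_mul_of_nonneg_left (hK_up w) (norm_nonneg _)
        _ = ‖RA * R⁻¹‖ / (1 - ε₁) * ‖euc w‖ := by ring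
    -- smin lower bound for A * Rh⁻¹
    have hsmin : 1 / ((1 + ε₁) * ‖R * RA⁻¹‖) ≤ smin (A * Rh⁻¹) := by
      refine le_smin_s5 _ hnne (fun w hw => ?_)
      rw [hval w]
      have hback : ‖euc ((R * Rh⁻¹) *ᵥ w)‖
          ≤ ‖R * RA⁻¹‖ * ‖euc ((RA * R⁻¹) *ᵥ ((R * Rh⁻¹) *ᵥ w))‖ := by
        have hidw : (R * RA⁻¹) *ᵥ ((RA * R⁻¹) *ᵥ ((R * Rh⁻¹) *ᵥ w)) = (R * Rh⁻¹) *ᵥ w := by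
          rw [mulVec_mulVec ((R * Rh⁻¹) *ᵥ w), hMP, one_mulVec]
        calc ‖euc ((R * Rh⁻¹) *ᵥ w)‖
            = ‖euc ((R * RA⁻¹) *ᵥ ((RA * R⁻¹) *ᵥ ((R * Rh⁻¹) *ᵥ w)))‖ := by rw [hidw]
          _ ≤ ‖R * RA⁻¹‖ * ‖euc ((RA * R⁻¹) *ᵥ ((R * Rh⁻¹) *ᵥ w))‖ := norm_phi_le _ _
      have hlow : 1 / (1 + ε₁) ≤ ‖euc ((R * Rh⁻¹) *ᵥ w)‖ := by
        have := hK_lo w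
        rw [hw] at this
        simpa using this
      rw [div_le_iff₀ (by positivity)]
      calc (1:ℝ) = (1 / (1 + ε₁)) * (1 + ε₁) := by field_simp
        _ ≤ ‖euc ((R * Rh⁻¹) *ᵥ w)‖ * (1 + ε₁) :=
            mul_le_mul_of_nonneg_right hlow h2e.le
        _ ≤ (‖R * RA⁻¹‖ * ‖euc ((RA * R⁻¹) *ᵥ ((R * Rh⁻¹) *ᵥ w))‖) * (1 + ε₁) :=
            mul_le_mul_of_nonneg_right hback h2e.le
        _ = ‖euc ((RA * R⁻¹) *ᵥ ((R * Rh⁻¹) *ᵥ w))‖ * ((1 + ε₁) * ‖R * RA⁻¹‖) := by ring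
    have hsmin_pos : 0 < smin (A * Rh⁻¹) := lt_of_lt_of_le (by positivity) hsmin
    -- smin of M := R * RA⁻¹
    have hsminM_lb : 1 / ‖RA * R⁻¹‖ ≤ smin (R * RA⁻¹) := by
      refine le_smin_s5 _ hnne (fun w hw => ?_)
      have hidw : (RA * R⁻¹) *ᵥ ((R * RA⁻¹) *ᵥ w) = w := by
        rw [mulVec_mulVec, hPM, one_mulVec]
      have h1 : (1:ℝ) = ‖euc ((RA * R⁻¹) *ᵥ ((R * RA⁻¹) *ᵥ w))‖ := by
        rw [hidw, hw]
      have h2 : ‖euc ((RA * R⁻¹) *ᵥ ((R * RA⁻¹) *ᵥ w))‖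
          ≤ ‖RA * R⁻¹‖ * ‖euc ((R * RA⁻¹) *ᵥ w)‖ := norm_phi_le _ _
      rw [div_le_iff₀ hP0]
      calc (1:ℝ) ≤ ‖RA * R⁻¹‖ * ‖euc ((R * RA⁻¹) *ᵥ w)‖ := h1 ▸ h2
        _ = ‖euc ((R * RA⁻¹) *ᵥ w)‖ * ‖RA * R⁻¹‖ := by ring
    have hsminM_pos : 0 < smin (R * RA⁻¹) := lt_of_lt_of_le (by positivity) hsminM_lb
    -- smin M * ‖z‖ ≤ ‖M z‖
    have hsminM_mul : ∀ w : Fin n → ℝ,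
        smin (R * RA⁻¹) * ‖euc w‖ ≤ ‖euc ((R * RA⁻¹) *ᵥ w)‖ := smin_mul_le_s5 _
    -- ‖P‖ ≤ 1 / smin M
    have hP_le : ‖RA * R⁻¹‖ ≤ 1 / smin (R * RA⁻¹) := by
      refine opnorm_le _ (by positivity) (fun w => ?_)
      have hidw : (R * RA⁻¹) *ᵥ ((RA * R⁻¹) *ᵥ w) = w := by
        rw [mulVec_mulVec, hMP, one_mulVec]
      have := hsminM_mul ((RA * R⁻¹) *ᵥ w)
      rw [hidw] at this
      rw [div_mul_eq_mul_div, le_div_iff₀ hsminM_pos]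
      calc ‖euc ((RA * R⁻¹) *ᵥ w)‖ * smin (R * RA⁻¹)
          = smin (R * RA⁻¹) * ‖euc ((RA * R⁻¹) *ᵥ w)‖ := by ring
        _ ≤ ‖euc w‖ := this
        _ = 1 * ‖euc w‖ := (one_mul _).symm
    -- spec and smin of S * QA
    have hspecSQA : spec (S * QA) = ‖R * RA⁻¹‖ := by
      rw [spec_eq]
      refine le_antisymm ?_ ?_
      · refine opnorm_le _ (norm_nonneg _) (fun w => ?_)
        rw [hSval w]
        exact norm_phi_le _ _
      · refine opnorm_le _ (norm_nonneg _) (fun w => ?_)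
        rw [← hSval w]
        exact norm_phi_le _ _
    have hsminSQA : smin (S * QA) = smin (R * RA⁻¹) := smin_congr _ _ hSval
    -- final arithmetic
    unfold cond2
    rw [hspecSQA, hsminSQA]
    have step1 : spec (A * Rh⁻¹) / smin (A * Rh⁻¹)
        ≤ (‖RA * R⁻¹‖ / (1 - ε₁)) / (1 / ((1 + ε₁) * ‖R * RA⁻¹‖)) := by
      refine div_le_div₀ (div_nonneg (norm_nonneg _) h1e.le) hspec (by positivity) hsmin
    refine le_trans step1 ?_
    have hfin : (‖RA * R⁻¹‖ / (1 - ε₁)) / (1 / ((1 + ε₁) * ‖R * RA⁻¹‖))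
        = ‖RA * R⁻¹‖ * ((1 + ε₁) * ‖R * RA⁻¹‖) / (1 - ε₁) := by
      field_simp
    rw [hfin]
    have h2 : ‖RA * R⁻¹‖ * ((1 + ε₁) * ‖R * RA⁻¹‖) / (1 - ε₁)
        ≤ (1 / smin (R * RA⁻¹)) * ((1 + ε₁) * ‖R * RA⁻¹‖) / (1 - ε₁) := by
      have hmul := mul_le_mul_of_nonneg_right hP_le
        (by positivity : (0:ℝ) ≤ (1 + ε₁) * ‖R * RA⁻¹‖)
      exact (div_le_div_iff_of_pos_right h1e).mpr hmul
    refine le_trans h2 (le_of_eq ?_)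
    ring
end

section
/- Let A be an m×n matrix and R an n×n matrix. Suppose Ŷ is an m×n matrix whose rows ŷᵢᵀ satisfy ŷᵢᵀ (R + Δᵢ) = aᵢᵀ with entrywise bound |Δᵢ| ≤ γ |R| for each i (where aᵢᵀ is the i-th row of A and γ ≥ 0). Then ‖Ŷ R − A‖₂ ≤ n γ ‖R‖₂ ‖Ŷ‖₂. -/
open Matrix BigOperators

lemma toEL_apply {m n : ℕ} (A : Matrix (Fin m) (Fin n) ℝ) (x : EuclideanSpace ℝ (Fin n))
    (i : Fin m) : Matrix.toEuclideanLin A x i = ∑ j, A i j * x j := by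
  simp [Matrix.toEuclideanLin, Matrix.mulVec, dotProduct]

lemma frob_nonneg {m n : ℕ} (A : Matrix (Fin m) (Fin n) ℝ) : 0 ≤ frob A := Real.sqrt_nonneg _

lemma spec_le_frob {m n : ℕ} (A : Matrix (Fin m) (Fin n) ℝ) : spec A ≤ frob A := by
  apply ContinuousLinearMap.opNorm_le_bound _ (frob_nonneg A)
  intro x
  rw [EuclideanSpace.norm_eq, EuclideanSpace.norm_eq]
  simp only [LinearMap.coe_toContinuousLinearMap', Real.norm_eq_abs, sq_abs]
  rw [frob, ← Real.sqrt_mul (by positivity)]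
  apply Real.sqrt_le_sqrt
  calc ∑ i, Matrix.toEuclideanLin A x i ^ 2
      ≤ ∑ i : Fin m, (∑ j, A i j ^ 2) * ∑ j, x j ^ 2 := by
        refine Finset.sum_le_sum fun i _ => ?_
        rw [toEL_apply]
        exact Finset.sum_mul_sq_le_sq_mul_sq _ _ _
    _ = (∑ i, ∑ j, A i j ^ 2) * ∑ j, x j ^ 2 := by rw [Finset.sum_mul]

lemma frob_mono {m n : ℕ} {A B : Matrix (Fin m) (Fin n) ℝ}
    (h : ∀ i j, |A i j| ≤ B i j) : frob A ≤ frob B := by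
  apply Real.sqrt_le_sqrt
  refine Finset.sum_le_sum fun i _ => Finset.sum_le_sum fun j _ => ?_
  rw [← sq_abs (A i j)]
  exact pow_le_pow_left₀ (abs_nonneg _) (h i j) 2

lemma frob_mul_le {m n p : ℕ} (A : Matrix (Fin m) (Fin n) ℝ) (B : Matrix (Fin n) (Fin p) ℝ) :
    frob (A * B) ≤ frob A * frob B := by
  rw [frob, frob, frob, ← Real.sqrt_mul (by positivity)]
  apply Real.sqrt_le_sqrt
  calc ∑ i, ∑ j, (A * B) i j ^ 2
      ≤ ∑ i : Fin m, ∑ j : Fin p, (∑ k, A i k ^ 2) * ∑ k, B k j ^ 2 := by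
        refine Finset.sum_le_sum fun i _ => Finset.sum_le_sum fun j _ => ?_
        rw [Matrix.mul_apply]
        exact Finset.sum_mul_sq_le_sq_mul_sq _ _ _
    _ = (∑ i, ∑ k, A i k ^ 2) * ∑ k, ∑ j, B k j ^ 2 := by
        rw [Finset.sum_mul]
        refine Finset.sum_congr rfl fun i _ => ?_
        rw [← Finset.mul_sum, Finset.sum_comm]

lemma frob_le_sqrt_spec {m n : ℕ} (A : Matrix (Fin m) (Fin n) ℝ) :
    frob A ≤ Real.sqrt n * spec A := by
  have hcol : ∀ j : Fin n, ∑ i, A i j ^ 2 ≤ spec A ^ 2 := by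
    intro j
    have h := (LinearMap.toContinuousLinearMap
      (Matrix.toEuclideanLin A : EuclideanSpace ℝ (Fin n) →ₗ[ℝ] EuclideanSpace ℝ (Fin m))).le_opNorm
      (EuclideanSpace.single j 1)
    rw [EuclideanSpace.norm_single, norm_one, mul_one] at h
    have h2 : ‖(LinearMap.toContinuousLinearMap
      (Matrix.toEuclideanLin A : EuclideanSpace ℝ (Fin n) →ₗ[ℝ] EuclideanSpace ℝ (Fin m)))
        (EuclideanSpace.single j 1)‖ ^ 2 = ∑ i, A i j ^ 2 := by
      rw [EuclideanSpace.norm_eq, Real.sq_sqrt (by positivity)]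
      refine Finset.sum_congr rfl fun i _ => ?_
      simp only [LinearMap.coe_toContinuousLinearMap', Real.norm_eq_abs, sq_abs]
      rw [toEL_apply]
      simp [EuclideanSpace.single_apply]
    rw [← h2]
    exact pow_le_pow_left₀ (norm_nonneg _) h 2
  calc frob A = Real.sqrt (∑ j : Fin n, ∑ i, A i j ^ 2) := by rw [frob, Finset.sum_comm]
    _ ≤ Real.sqrt (∑ _j : Fin n, spec A ^ 2) :=
        Real.sqrt_le_sqrt (Finset.sum_le_sum fun j _ => hcol j)
    _ = Real.sqrt n * spec A := by
        rw [Finset.sum_const, Finset.card_univ, Fintype.card_fin, nsmul_eq_mul,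
          Real.sqrt_mul (by positivity), Real.sqrt_sq (spec_nonneg A)]

lemma frob_smul {m n : ℕ} (c : ℝ) (X : Matrix (Fin m) (Fin n) ℝ) :
    frob (c • X) = |c| * frob X := by
  simp only [frob, Matrix.smul_apply, smul_eq_mul, mul_pow]
  rw [← Real.sqrt_sq_eq_abs, ← Real.sqrt_mul (sq_nonneg c)]
  congr 1
  simp [Finset.mul_sum]

lemma frob_abs {m n : ℕ} (X : Matrix (Fin m) (Fin n) ℝ) :
    frob (X.map (|·|)) = frob X := by
  simp [frob, Matrix.map_apply, sq_abs]

theorem stmt10 {m n : ℕ} (A Yh : Matrix (Fin m) (Fin n) ℝ)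
    (R : Matrix (Fin n) (Fin n) ℝ) (Δ : Fin m → Matrix (Fin n) (Fin n) ℝ)
    (γ : ℝ) (hγ : 0 ≤ γ)
    (h1 : ∀ i : Fin m, (Yh i) ᵥ* (R + Δ i) = A i)
    (h2 : ∀ (i : Fin m) (j k : Fin n), |Δ i j k| ≤ γ * |R j k|) :
    spec (Yh * R - A) ≤ (n : ℝ) * γ * spec R * spec Yh := by
  have hM : ∀ i j, |(Yh * R - A) i j| ≤ (γ • (Yh.map (|·|) * R.map (|·|))) i j := by
    intro i j
    have hA := congrFun (h1 i) j
    simp only [Matrix.vecMul, dotProduct, Matrix.add_apply, mul_add,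
      Finset.sum_add_distrib] at hA
    have hsub : (Yh * R - A) i j = -(∑ k, Yh i k * Δ i k j) := by
      rw [Matrix.sub_apply, Matrix.mul_apply, ← hA]
      ring
    rw [hsub, abs_neg, Matrix.smul_apply, Matrix.mul_apply, smul_eq_mul, Finset.mul_sum]
    calc |∑ k, Yh i k * Δ i k j| ≤ ∑ k, |Yh i k * Δ i k j| := Finset.abs_sum_le_sum_abs _ _
      _ ≤ ∑ k, γ * ((Yh.map (|·|)) i k * (R.map (|·|)) k j) := by
          refine Finset.sum_le_sum fun k _ => ?_
          rw [abs_mul, Matrix.map_apply, Matrix.map_apply]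
          calc |Yh i k| * |Δ i k j| ≤ |Yh i k| * (γ * |R k j|) :=
                mul_le_mul_of_nonneg_left (h2 i k j) (abs_nonneg _)
            _ = γ * (|Yh i k| * |R k j|) := by ring
  have key : spec (Yh * R - A) ≤ γ * (frob Yh * frob R) := by
    calc spec (Yh * R - A) ≤ frob (Yh * R - A) := spec_le_frob _
      _ ≤ frob (γ • (Yh.map (|·|) * R.map (|·|))) := frob_mono hM
      _ = γ * frob (Yh.map (|·|) * R.map (|·|)) := by rw [frob_smul, abs_of_nonneg hγ]
      _ ≤ γ * (frob (Yh.map (|·|)) * frob (R.map (|·|))) :=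
          mul_le_mul_of_nonneg_left (frob_mul_le _ _) hγ
      _ = γ * (frob Yh * frob R) := by rw [frob_abs, frob_abs]
  calc spec (Yh * R - A) ≤ γ * (frob Yh * frob R) := key
    _ ≤ γ * ((Real.sqrt n * spec Yh) * (Real.sqrt n * spec R)) := by
        apply mul_le_mul_of_nonneg_left _ hγ
        exact mul_le_mul (frob_le_sqrt_spec Yh) (frob_le_sqrt_spec R) (frob_nonneg R)
          (mul_nonneg (Real.sqrt_nonneg _) (spec_nonneg _))
    _ = (Real.sqrt n * Real.sqrt n) * γ * spec R * spec Yh := by ring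
    _ = (n : ℝ) * γ * spec R * spec Yh := by
        rw [Real.mul_self_sqrt (Nat.cast_nonneg n)]
end
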